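/- Quantum Hoeffding (direct) bound for asymmetric binary quantum hypothesis testing: Let ρ, σ be quantum states on ℂ^d with σ positive definite, let α ∈ (0,1) and ε ∈ (0,1). Then β_ε(ρ‖σ) > 0 and −ln β_ε(ρ‖σ) ≥ D_α(ρ‖σ) + (α/(α−1))·ln(1/ε); equivalently, β_ε(ρ‖σ) ≤ ( Tr[ρ^α σ^{1−α}] / ε^α )^{1/(1−α)}. -/

import Mathlib

/-!
Ozawa's proof of Audenaert's inequality `Tr A - Tr (A - B)₊ ≤ Tr A^s B^{1-s}` (for `A, B ≥ 0`,
`s ∈ [0, 1]`) needs only the operator monotonicity of `x ↦ x^s` (Löwner–Heinz). For `A = ρ`,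
`B = μσ` and the projection `P` onto the positive part of `ρ - μσ`, the left side is
`Tr (1 - P)ρ + μ Tr Pσ`, so `μ^{1-α} Tr ρ^α σ^{1-α} ≤ ε` makes `P` a test of type I error at
most `ε` and type II error at most `ε / μ`; the optimal such `μ` gives the bound. Positivity of
`β_ε` and of `Tr ρ^α σ^{1-α}` comes from `ρ ≤ c σ` for some `c > 0`, as `σ` is positive definite.
-/

open scoped ComplexOrder Classical

noncomputable section

namespace QHT

variable {ι : Type*} [Fintype ι] [DecidableEq ι]

/-- Trace norm of a complex matrix: `Tr[√(Aᴴ A)]`. -/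
def traceNorm (A : Matrix ι ι ℂ) : ℝ :=
  (((Matrix.posSemidef_conjTranspose_mul_self A).1.eigenvectorUnitary : Matrix ι ι ℂ) *
      Matrix.diagonal (((↑) : ℝ → ℂ) ∘ Real.sqrt ∘ (Matrix.posSemidef_conjTranspose_mul_self A).1.eigenvalues) *
      (star (Matrix.posSemidef_conjTranspose_mul_self A).1.eigenvectorUnitary : Matrix ι ι ℂ)).trace.re

/-- A quantum state: positive semidefinite with unit trace. -/
def IsState (ρ : Matrix ι ι ℂ) : Prop := ρ.PosSemidef ∧ ρ.trace = 1

/-- Positive semidefinite square root (junk value `0` off the PSD matrices). -/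
def matSqrt (A : Matrix ι ι ℂ) : Matrix ι ι ℂ :=
  if h : A.PosSemidef then
    (h.1.eigenvectorUnitary : Matrix ι ι ℂ) *
      Matrix.diagonal (((↑) : ℝ → ℂ) ∘ Real.sqrt ∘ h.1.eigenvalues) *
      (star h.1.eigenvectorUnitary : Matrix ι ι ℂ)
  else 0

/-- Real power of a Hermitian matrix, applying `x ↦ x ^ s` to positive
eigenvalues and `x ↦ 0` to the remaining ones (so `A ^ 0` is the support
projection); junk value `0` off the Hermitian matrices. -/
def matRpow (A : Matrix ι ι ℂ) (s : ℝ) : Matrix ι ι ℂ :=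
  if h : A.IsHermitian then
    (h.eigenvectorUnitary : Matrix ι ι ℂ) *
      Matrix.diagonal (fun i =>
        ((if 0 < h.eigenvalues i then (h.eigenvalues i) ^ s else 0 : ℝ) : ℂ)) *
      (star (h.eigenvectorUnitary : Matrix ι ι ℂ))
  else 0

/-- Fidelity `F(ρ,σ) = ‖√ρ √σ‖₁²`. -/
def Fid (ρ σ : Matrix ι ι ℂ) : ℝ := (traceNorm (matSqrt ρ * matSqrt σ)) ^ 2

/-- Holevo fidelity `F_H(ρ,σ) = (Tr[√ρ √σ])²`. -/
def FidH (ρ σ : Matrix ι ι ℂ) : ℝ := (((matSqrt ρ * matSqrt σ).trace).re) ^ 2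

/-- `Q_s(A‖B) = Tr[A^s B^{1-s}]`. -/
def Qs (s : ℝ) (A B : Matrix ι ι ℂ) : ℝ := ((matRpow A s * matRpow B (1 - s)).trace).re

/-- `Q_min(A‖B) = min_{s ∈ [0,1]} Q_s(A‖B)`. -/
def Qmin (A B : Matrix ι ι ℂ) : ℝ :=
  sInf { x : ℝ | ∃ s ∈ Set.Icc (0 : ℝ) 1, x = Qs s A B }

/-- Bures distance. -/
def dB (ρ σ : Matrix ι ι ℂ) : ℝ := Real.sqrt (2 * (1 - Real.sqrt (Fid ρ σ)))

/-- Quantum Hellinger distance. -/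
def dH (ρ σ : Matrix ι ι ℂ) : ℝ := Real.sqrt (2 * (1 - Real.sqrt (FidH ρ σ)))

/-- `n`-fold Kronecker (tensor) power of a matrix. -/
def tensorPow {d : ℕ} (A : Matrix (Fin d) (Fin d) ℂ) (n : ℕ) :
    Matrix (Fin n → Fin d) (Fin n → Fin d) ℂ :=
  Matrix.of fun i j => ∏ k, A (i k) (j k)

/-- Optimal error probability of symmetric binary quantum hypothesis testing
with `n` copies. -/
def pErr {d : ℕ} (p : ℝ) (ρ : Matrix (Fin d) (Fin d) ℂ) (q : ℝ)
    (σ : Matrix (Fin d) (Fin d) ℂ) (n : ℕ) : ℝ :=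
  sInf { x : ℝ | ∃ Λ : Matrix (Fin n → Fin d) (Fin n → Fin d) ℂ,
    Λ.PosSemidef ∧ (1 - Λ).PosSemidef ∧
    x = p * (((1 - Λ) * tensorPow ρ n).trace).re + q * ((Λ * tensorPow σ n).trace).re }

/-- Sample complexity of symmetric binary quantum hypothesis testing. -/
def sampleComplexity {d : ℕ} (p : ℝ) (ρ : Matrix (Fin d) (Fin d) ℂ) (q : ℝ)
    (σ : Matrix (Fin d) (Fin d) ℂ) (ε : ℝ) : ℕ :=
  sInf { n : ℕ | 1 ≤ n ∧ pErr p ρ q σ n ≤ ε }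

/-- Optimal type II error `β_ε(ρ‖σ)` of asymmetric hypothesis testing. -/
def betaErr (ε : ℝ) (ρ σ : Matrix ι ι ℂ) : ℝ :=
  sInf { x : ℝ | ∃ Λ : Matrix ι ι ℂ, Λ.PosSemidef ∧ (1 - Λ).PosSemidef ∧
    (((1 - Λ) * ρ).trace).re ≤ ε ∧ x = ((Λ * σ).trace).re }

/-- Sample complexity of asymmetric binary quantum hypothesis testing. -/
def sampleComplexityAsym {d : ℕ} (ρ σ : Matrix (Fin d) (Fin d) ℂ) (ε δ : ℝ) : ℕ :=
  sInf { n : ℕ | 1 ≤ n ∧ betaErr ε (tensorPow ρ n) (tensorPow σ n) ≤ δ }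

/-- Petz–Rényi divergence `D_α(ρ‖σ)`. -/
def petzRenyi (α : ℝ) (ρ σ : Matrix ι ι ℂ) : ℝ :=
  (1 / (α - 1)) * Real.log (((matRpow ρ α * matRpow σ (1 - α)).trace).re)

/-- Sandwiched Rényi divergence `D̃_α(ρ‖σ)`. -/
def sandwichedRenyi (α : ℝ) (ρ σ : Matrix ι ι ℂ) : ℝ :=
  (1 / (α - 1)) * Real.log
    (((matRpow (matRpow σ ((1 - α) / (2 * α)) * ρ * matRpow σ ((1 - α) / (2 * α))) α).trace).re)

end QHT

open scoped MatrixOrder Matrix.Norms.L2Operator NNReal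

namespace CFC

variable {A : Type*} [CStarAlgebra A] [PartialOrder A] [StarOrderedRing A]

lemma rpow_mul_rpow_one_sub {a : A} (ha : 0 ≤ a) {x : ℝ} (hx : x ∈ Set.Icc 0 1) :
    a ^ x * a ^ (1 - x) = a := by
  rw [rpow_def, rpow_def, ← cfc_mul _ _ a (NNReal.continuous_rpow_const hx.1).continuousOn
    (NNReal.continuous_rpow_const (sub_nonneg.2 hx.2)).continuousOn]
  conv_rhs => rw [← cfc_id' ℝ≥0 a]
  refine cfc_congr fun t _ => ?_
  rw [← NNReal.rpow_add' (by norm_num), add_sub_cancel, NNReal.rpow_one]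

lemma smul_rpow {a : A} (ha : 0 ≤ a) {r : ℝ} (hr : 0 ≤ r) {y : ℝ} (hy : 0 ≤ y) :
    (r • a) ^ y = r ^ y • a ^ y := by
  have hcont : Continuous fun t : ℝ => t ^ y := Real.continuous_rpow_const hy
  rw [rpow_eq_cfc_real (smul_nonneg hr ha), rpow_eq_cfc_real ha,
    ← cfc_smul _ _ a hcont.continuousOn, ← cfc_comp_smul _ _ a hcont.continuousOn]
  refine cfc_congr fun t ht => ?_
  simp [Real.mul_rpow hr (spectrum_nonneg_of_nonneg ha ht)]

end CFC

lemma IsSelfAdjoint.exists_le_smul_of_isStrictlyPositive {A : Type*} [CStarAlgebra A]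
    [PartialOrder A] [StarOrderedRing A] {a b : A} (ha : IsSelfAdjoint a)
    (hb : IsStrictlyPositive b) : ∃ c : ℝ, 0 < c ∧ a ≤ c • b := by
  cases subsingleton_or_nontrivial A
  · exact ⟨1, one_pos, (Subsingleton.elim a _).le⟩
  obtain ⟨r, hr, hrb⟩ := (CFC.exists_pos_algebraMap_le_iff hb.isSelfAdjoint).2
    fun x hx => hb.spectrum_pos hx
  refine ⟨(‖a‖ + 1) / r, by positivity, ?_⟩
  calc a ≤ algebraMap ℝ A ‖a‖ := ha.le_algebraMap_norm_self
    _ ≤ algebraMap ℝ A (‖a‖ + 1) := by gcongr; linarith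
    _ = ((‖a‖ + 1) / r) • algebraMap ℝ A r := by
        rw [Algebra.smul_def, ← map_mul, div_mul_cancel₀ _ hr.ne']
    _ ≤ ((‖a‖ + 1) / r) • b := by gcongr

namespace Matrix

variable {n : Type*} [Fintype n] [DecidableEq n]

lemma re_trace_mul_nonneg {X Y : Matrix n n ℂ} (hX : 0 ≤ X) (hY : 0 ≤ Y) :
    0 ≤ (X * Y).trace.re := by
  obtain ⟨S, rfl⟩ := CStarAlgebra.nonneg_iff_eq_star_mul_self.1 hX
  rw [mul_assoc, trace_mul_comm]
  have hSYS := nonneg_iff_posSemidef.1 (star_right_conjugate_nonneg hY S)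
  exact (Complex.le_def.1 hSYS.trace_nonneg).1

lemma re_trace_mul_le_mul_left {X Y Y' : Matrix n n ℂ} (hX : 0 ≤ X) (h : Y ≤ Y') :
    (X * Y).trace.re ≤ (X * Y').trace.re := by
  have := re_trace_mul_nonneg hX (sub_nonneg.2 h)
  rwa [mul_sub, trace_sub, Complex.sub_re, sub_nonneg] at this

lemma re_trace_mul_le_mul_right {X X' Y : Matrix n n ℂ} (hY : 0 ≤ Y) (h : X ≤ X') :
    (X * Y).trace.re ≤ (X' * Y).trace.re := by
  rw [trace_mul_comm X, trace_mul_comm X']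
  exact re_trace_mul_le_mul_left hY h

lemma IsHermitian.exists_mul_eq_posPart {H : Matrix n n ℂ} (hH : H.IsHermitian) :
    ∃ P : Matrix n n ℂ, 0 ≤ P ∧ P ≤ 1 ∧ H * P = H⁺ := by
  have hH' : IsSelfAdjoint H := hH
  -- the spectrum is finite, so the calculus also applies to the discontinuous step function
  have hfin := H.finite_real_spectrum
  refine ⟨cfc (fun x : ℝ => if 0 < x then 1 else 0) H, cfc_nonneg fun x _ => ?_,
    cfc_le_one _ _ fun x _ => ?_, ?_⟩
  · split_ifs <;> norm_num
  · split_ifs <;> norm_num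
  · rw [CFC.posPart_def, cfcₙ_eq_cfc]
    nth_rw 1 [← cfc_id' ℝ H]
    rw [← cfc_mul _ _ H (hfin.continuousOn _) (hfin.continuousOn _)]
    refine cfc_congr fun x _ => ?_
    split_ifs with hx
    · simp [hx.le]
    · simp [not_lt.1 hx]

lemma re_trace_sub_le_re_trace_rpow_mul_rpow {A B D : Matrix n n ℂ} (hA : 0 ≤ A) (hB : 0 ≤ B)
    (hD : 0 ≤ D) (hABD : A - B ≤ D) {s : ℝ} (hs : s ∈ Set.Icc 0 1) :
    A.trace.re - D.trace.re ≤ (A ^ s * B ^ (1 - s)).trace.re := by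
  have hs' : 1 - s ∈ Set.Icc (0 : ℝ) 1 := ⟨sub_nonneg.2 hs.2, sub_le_self _ hs.1⟩
  have hAC : A ≤ B + D := by rw [← sub_le_iff_le_add']; exact hABD
  have hBC : B ≤ B + D := le_add_of_nonneg_right hD
  have trace_eq (X : Matrix n n ℂ) (hX : 0 ≤ X) (Y : Matrix n n ℂ) :
      (X ^ s * (X ^ (1 - s) - Y)).trace.re = X.trace.re - (X ^ s * Y).trace.re := by
    rw [mul_sub, CFC.rpow_mul_rpow_one_sub hX hs, trace_sub, Complex.sub_re]
  have hCB : 0 ≤ (B + D) ^ (1 - s) - B ^ (1 - s) := sub_nonneg.2 (CFC.rpow_le_rpow hs' hBC)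
  have key : A.trace.re - (A ^ s * B ^ (1 - s)).trace.re ≤ D.trace.re := calc
    A.trace.re - (A ^ s * B ^ (1 - s)).trace.re
      = (A ^ s * (A ^ (1 - s) - B ^ (1 - s))).trace.re := (trace_eq A hA _).symm
    _ ≤ (A ^ s * ((B + D) ^ (1 - s) - B ^ (1 - s))).trace.re :=
      re_trace_mul_le_mul_left CFC.rpow_nonneg (sub_le_sub_right (CFC.rpow_le_rpow hs' hAC) _)
    _ ≤ ((B + D) ^ s * ((B + D) ^ (1 - s) - B ^ (1 - s))).trace.re :=
      re_trace_mul_le_mul_right hCB (CFC.rpow_le_rpow hs hAC)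
    _ = (B + D).trace.re - ((B + D) ^ s * B ^ (1 - s)).trace.re := trace_eq _ (hB.trans hBC) _
    _ ≤ (B + D).trace.re - (B ^ s * B ^ (1 - s)).trace.re :=
      sub_le_sub_left (re_trace_mul_le_mul_right (Y := B ^ (1 - s)) CFC.rpow_nonneg
        (CFC.rpow_le_rpow hs hBC)) _
    _ = D.trace.re := by
      rw [CFC.rpow_mul_rpow_one_sub hB hs, trace_add, Complex.add_re, add_sub_cancel_left]
  exact sub_le_comm.1 key

lemma exists_test_re_trace_add_le {A B : Matrix n n ℂ} (hA : 0 ≤ A) (hB : 0 ≤ B) {s : ℝ}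
    (hs : s ∈ Set.Icc 0 1) :
    ∃ Λ : Matrix n n ℂ, 0 ≤ Λ ∧ Λ ≤ 1 ∧
      ((1 - Λ) * A).trace.re + (Λ * B).trace.re ≤ (A ^ s * B ^ (1 - s)).trace.re := by
  have hAB : (A - B).IsHermitian :=
    (nonneg_iff_posSemidef.1 hA).1.sub (nonneg_iff_posSemidef.1 hB).1
  obtain ⟨P, hP₀, hP₁, hP⟩ := hAB.exists_mul_eq_posPart
  refine ⟨P, hP₀, hP₁, le_of_eq_of_le ?_ (re_trace_sub_le_re_trace_rpow_mul_rpow hA hB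
    (CFC.posPart_nonneg _) (CFC.le_posPart hAB.isSelfAdjoint) hs)⟩
  rw [← hP, sub_mul, trace_mul_comm (A - B), mul_sub, one_mul, trace_sub, trace_sub]
  simp only [Complex.sub_re]
  ring

lemma re_trace_le_rpow_mul_re_trace_rpow_mul_rpow {A B : Matrix n n ℂ} (hA : 0 ≤ A)
    (hB : 0 ≤ B) {c : ℝ} (hc : 0 ≤ c) (hAB : A ≤ c • B) {s : ℝ} (hs : s ∈ Set.Icc 0 1) :
    A.trace.re ≤ c ^ (1 - s) * (A ^ s * B ^ (1 - s)).trace.re := by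
  have := re_trace_sub_le_re_trace_rpow_mul_rpow hA (smul_nonneg hc hB) le_rfl
    (sub_nonpos.2 hAB) hs
  rwa [trace_zero, Complex.zero_re, sub_zero, CFC.smul_rpow hB hc (sub_nonneg.2 hs.2),
    mul_smul_comm, trace_smul, Complex.real_smul, Complex.re_ofReal_mul] at this

end Matrix

namespace QHT

section

open Matrix

variable {ι : Type*} [Fintype ι] [DecidableEq ι]

lemma matRpow_eq_rpow {A : Matrix ι ι ℂ} (hA : 0 ≤ A) {s : ℝ} (hs : s ≠ 0) :
    matRpow A s = A ^ s := by
  have hA' := nonneg_iff_posSemidef.1 hA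
  rw [CFC.rpow_eq_cfc_real hA, hA'.1.cfc_eq, IsHermitian.cfc, matRpow, dif_pos hA'.1,
    Unitary.conjStarAlgAut_apply]
  congr 3
  ext i
  rcases (hA'.eigenvalues_nonneg i).lt_or_eq with h | h
  · simp [h]
  · simp [← h, Real.zero_rpow hs]

lemma Qs_eq_re_trace_rpow_mul_rpow {A B : Matrix ι ι ℂ} (hA : 0 ≤ A) (hB : 0 ≤ B) {s : ℝ}
    (hs : s ∈ Set.Ioo 0 1) : Qs s A B = (A ^ s * B ^ (1 - s)).trace.re := by
  rw [Qs, matRpow_eq_rpow hA hs.1.ne', matRpow_eq_rpow hB (sub_ne_zero.2 hs.2.ne')]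

lemma betaErr_le {ε : ℝ} {ρ σ Λ : Matrix ι ι ℂ} (hσ : 0 ≤ σ) (hΛ₀ : 0 ≤ Λ) (hΛ₁ : Λ ≤ 1)
    (hε : ((1 - Λ) * ρ).trace.re ≤ ε) : betaErr ε ρ σ ≤ (Λ * σ).trace.re := by
  refine csInf_le ⟨0, ?_⟩ ⟨Λ, nonneg_iff_posSemidef.1 hΛ₀, hΛ₁, hε, rfl⟩
  rintro _ ⟨Λ', hΛ', -, -, rfl⟩
  exact re_trace_mul_nonneg hΛ'.nonneg hσ

lemma div_le_betaErr {ε c : ℝ} {ρ σ : Matrix ι ι ℂ} (hε : 0 ≤ ε) (hρ : ρ.trace = 1)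
    (hc : 0 < c) (hρσ : ρ ≤ c • σ) : (1 - ε) / c ≤ betaErr ε ρ σ := by
  have hfeasible : ((1 : Matrix ι ι ℂ) * σ).trace.re ∈ {x : ℝ | ∃ Λ : Matrix ι ι ℂ,
      Λ.PosSemidef ∧ (1 - Λ).PosSemidef ∧ ((1 - Λ) * ρ).trace.re ≤ ε ∧ x = (Λ * σ).trace.re} :=
    ⟨1, PosSemidef.one, by simpa using PosSemidef.zero, by simpa using hε, rfl⟩
  refine le_csInf ⟨_, hfeasible⟩ ?_
  rintro _ ⟨Λ, hΛ, -, herr, rfl⟩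
  have hρΛ : (Λ * ρ).trace.re ≤ c * (Λ * σ).trace.re := by
    simpa [mul_smul_comm, trace_smul] using re_trace_mul_le_mul_left hΛ.nonneg hρσ
  rw [sub_mul, one_mul, trace_sub, hρ, Complex.sub_re, Complex.one_re] at herr
  rw [div_le_iff₀' hc]
  linarith

lemma betaErr_le_div {ε μ s : ℝ} {ρ σ : Matrix ι ι ℂ} (hρ : 0 ≤ ρ) (hσ : 0 ≤ σ)
    (hs : s ∈ Set.Icc 0 1) (hμ : 0 < μ)
    (hε : μ ^ (1 - s) * (ρ ^ s * σ ^ (1 - s)).trace.re ≤ ε) : betaErr ε ρ σ ≤ ε / μ := by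
  obtain ⟨Λ, hΛ₀, hΛ₁, hΛ⟩ := exists_test_re_trace_add_le hρ (smul_nonneg hμ.le hσ) hs
  rw [CFC.smul_rpow hσ hμ.le (sub_nonneg.2 hs.2)] at hΛ
  simp only [mul_smul_comm, trace_smul, Complex.real_smul, Complex.re_ofReal_mul] at hΛ
  have hI := re_trace_mul_nonneg (sub_nonneg.2 hΛ₁) hρ
  have hII := mul_nonneg hμ.le (re_trace_mul_nonneg hΛ₀ hσ)
  refine (betaErr_le hσ hΛ₀ hΛ₁ (by linarith)).trans ?_
  rw [le_div_iff₀' hμ]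
  linarith

lemma betaErr_le_rpow {ε s : ℝ} {ρ σ : Matrix ι ι ℂ} (hρ : 0 ≤ ρ) (hσ : 0 ≤ σ)
    (hs : s ∈ Set.Ioo 0 1) (hε : 0 < ε) (hQ : 0 < Qs s ρ σ) :
    betaErr ε ρ σ ≤ (Qs s ρ σ / ε ^ s) ^ ((1 : ℝ) / (1 - s)) := by
  set R := (Qs s ρ σ / ε ^ s) ^ ((1 : ℝ) / (1 - s))
  have hR : 0 < R := by positivity
  have hμ : (ε / R) ^ (1 - s) * Qs s ρ σ = ε := by
    rw [Real.div_rpow hε.le hR.le, ← Real.rpow_mul (by positivity),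
      one_div_mul_cancel (sub_ne_zero.2 hs.2.ne'), Real.rpow_one, Real.rpow_sub hε, Real.rpow_one]
    field_simp
  rw [Qs_eq_re_trace_rpow_mul_rpow hρ hσ hs] at hμ
  exact (betaErr_le_div hρ hσ ⟨hs.1.le, hs.2.le⟩ (div_pos hε hR) hμ.le).trans_eq
    (div_div_cancel₀ hε.ne')

end

theorem quantum_hoeffding_bound_general {d : ℕ} (ρ σ : Matrix (Fin d) (Fin d) ℂ)
    (hρ : IsState ρ) (hσpd : σ.PosDef)
    (α : ℝ) (hα : α ∈ Set.Ioo (0 : ℝ) 1) (ε : ℝ) (hε : ε ∈ Set.Ioo (0 : ℝ) 1) :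
    0 < betaErr ε ρ σ ∧
    petzRenyi α ρ σ + (α / (α - 1)) * Real.log (1 / ε) ≤ -Real.log (betaErr ε ρ σ) ∧
    betaErr ε ρ σ ≤ (Qs α ρ σ / ε ^ α) ^ ((1 : ℝ) / (1 - α)) := by
  obtain ⟨hε₀, hε₁⟩ := hε
  have hρ₀ : 0 ≤ ρ := hρ.1.nonneg
  have hσ₀ : 0 ≤ σ := hσpd.posSemidef.nonneg
  obtain ⟨c, hc, hρσ⟩ :=
    hρ.1.1.isSelfAdjoint.exists_le_smul_of_isStrictlyPositive hσpd.isStrictlyPositive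
  have hQ : 0 < Qs α ρ σ := by
    have h := Matrix.re_trace_le_rpow_mul_re_trace_rpow_mul_rpow hρ₀ hσ₀ hc.le hρσ
      (Set.Ioo_subset_Icc_self hα)
    rw [hρ.2, Complex.one_re, ← Qs_eq_re_trace_rpow_mul_rpow hρ₀ hσ₀ hα] at h
    exact pos_of_mul_pos_right (one_pos.trans_le h) (Real.rpow_nonneg hc.le _)
  have hβ : 0 < betaErr ε ρ σ :=
    (div_pos (sub_pos.2 hε₁) hc).trans_le (div_le_betaErr hε₀.le hρ.2 hc hρσ)
  have hβR := betaErr_le_rpow hρ₀ hσ₀ hα hε₀ hQ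
  refine ⟨hβ, ?_, hβR⟩
  have hα₁ : α - 1 ≠ 0 := sub_ne_zero.2 hα.2.ne
  have hα₁' : 1 - α ≠ 0 := sub_ne_zero.2 hα.2.ne'
  calc petzRenyi α ρ σ + α / (α - 1) * Real.log (1 / ε)
      = -Real.log ((Qs α ρ σ / ε ^ α) ^ ((1 : ℝ) / (1 - α))) := by
        rw [petzRenyi, ← Qs, Real.log_rpow (by positivity), Real.log_div hQ.ne' (by positivity),
          Real.log_rpow hε₀, one_div ε, Real.log_inv]
        field_simp
        ring
    _ ≤ -Real.log (betaErr ε ρ σ) := neg_le_neg (Real.log_le_log hβ hβR)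

/-- **Quantum Hoeffding (direct) bound for asymmetric binary quantum hypothesis
testing**: for `α ∈ (0,1)` and `ε ∈ (0,1)`, `β_ε(ρ‖σ) > 0`,
`−ln β_ε(ρ‖σ) ≥ D_α(ρ‖σ) + (α/(α−1)) ln(1/ε)`; equivalently
`β_ε(ρ‖σ) ≤ (Tr[ρ^α σ^{1−α}] / ε^α)^{1/(1−α)}`. -/
theorem quantum_hoeffding_bound {d : ℕ} (ρ σ : Matrix (Fin d) (Fin d) ℂ)
    (hρ : IsState ρ) (hσ : IsState σ) (hσpd : σ.PosDef)
    (α : ℝ) (hα : α ∈ Set.Ioo (0 : ℝ) 1) (ε : ℝ) (hε : ε ∈ Set.Ioo (0 : ℝ) 1) :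
    0 < betaErr ε ρ σ ∧
    petzRenyi α ρ σ + (α / (α - 1)) * Real.log (1 / ε) ≤ -Real.log (betaErr ε ρ σ) ∧
    betaErr ε ρ σ ≤ (Qs α ρ σ / ε ^ α) ^ ((1 : ℝ) / (1 - α)) :=
  quantum_hoeffding_bound_general ρ σ hρ hσpd α hα ε hε

end QHT

end
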